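/- For any u ∈ U and any λ ∈ ℝ^m, if there exists x ∈ X with G(x,u) = 0, then min_{x∈X} λᵀG(x,u) ≤ 0. Conversely, if u is such that inf_{x∈X} λᵀG(x,u) ≤ 0 for all λ ∈ ℝ^m, and X is compact convex with G(·,u) affine, then there exists x ∈ X with G(x,u) = 0. -/

import Mathlib

/-!
If `G(x) = 0` for some `x ∈ X`, the value `0` occurs among the `λᵀG(x)`, so their infimum (finite,
by compactness) is `≤ 0`. Conversely `G(X)` is compact and convex, being an affine image of `X`;
if it missed `0`, strict separation would give `λ` and `c > 0` with `λᵀy > c` on `G(X)`, and the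
cut for that `λ` would fail.
-/

open Set Matrix

section

variable {ι : Type*} [Fintype ι]

theorem exists_pos_lt_dotProduct_of_zero_notMem {S : Set (ι → ℝ)} (hconv : Convex ℝ S)
    (hclosed : IsClosed S) (h0 : (0 : ι → ℝ) ∉ S) :
    ∃ lam : ι → ℝ, ∃ c > 0, ∀ y ∈ S, c < lam ⬝ᵥ y := by
  classical
  obtain ⟨f, c, hc, hsep⟩ := geometric_hahn_banach_point_closed hconv hclosed h0
  refine ⟨(dotProductEquiv ℝ ι).symm f, c, by simpa using hc, fun y hy => ?_⟩
  exact (hsep y hy).trans_eq (congrArg (· y) ((dotProductEquiv ℝ ι).apply_symm_apply f).symm)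

theorem zero_mem_iff_forall_sInf_dotProduct_image_nonpos {K : Set (ι → ℝ)} (hne : K.Nonempty)
    (hcpt : IsCompact K) (hconv : Convex ℝ K) :
    (0 : ι → ℝ) ∈ K ↔ ∀ lam : ι → ℝ, sInf ((lam ⬝ᵥ ·) '' K) ≤ 0 := by
  have hbdd (lam : ι → ℝ) : BddBelow ((lam ⬝ᵥ ·) '' K) :=
    hcpt.bddBelow_image (by fun_prop)
  refine ⟨fun h0 lam => ?_, fun h => ?_⟩
  · simpa using csInf_le (hbdd lam) (mem_image_of_mem _ h0)
  · by_contra h0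
    obtain ⟨lam, c, hc, hsep⟩ := exists_pos_lt_dotProduct_of_zero_notMem hconv hcpt.isClosed h0
    have : c ≤ sInf ((lam ⬝ᵥ ·) '' K) :=
      le_csInf (hne.image _) (forall_mem_image.2 fun y hy => (hsep y hy).le)
    linarith [h lam]

end

/-- Feasibility cuts: if `u` is feasible (`∃ x ∈ X, G(x,u) = 0`) then
`min_{x∈X} λᵀG(x,u) ≤ 0` for every `λ`; conversely, for `X` nonempty compact
convex and `G(·,u)` affine, if `inf_{x∈X} λᵀG(x,u) ≤ 0` for all `λ` then
`u` is feasible. -/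
theorem benders_feasibility_cuts {n m : ℕ} (X : Set (Fin n → ℝ))
    (hne : X.Nonempty) (hcpt : IsCompact X) (hconv : Convex ℝ X)
    (G : (Fin n → ℝ) → Fin m → ℝ)
    (haff : ∃ (L : (Fin n → ℝ) →ₗ[ℝ] (Fin m → ℝ)) (b : Fin m → ℝ),
      ∀ x, G x = L x + b) :
    ((∃ x ∈ X, G x = 0) →
      ∀ lam : Fin m → ℝ, sInf {r | ∃ x ∈ X, r = ∑ i, lam i * G x i} ≤ 0) ∧
    ((∀ lam : Fin m → ℝ, sInf {r | ∃ x ∈ X, r = ∑ i, lam i * G x i} ≤ 0) →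
      ∃ x ∈ X, G x = 0) := by
  obtain ⟨L, b, hG⟩ := haff
  let A : (Fin n → ℝ) →ᵃ[ℝ] (Fin m → ℝ) := L.toAffineMap + AffineMap.const ℝ _ b
  obtain rfl : G = A := funext hG
  have hvalues (lam : Fin m → ℝ) :
      {r | ∃ x ∈ X, r = ∑ i, lam i * A x i} = (lam ⬝ᵥ ·) '' (A '' X) := by
    rw [image_image]; ext; simp [dotProduct, eq_comm]
  have hfeasible : (∃ x ∈ X, A x = 0) ↔ (0 : Fin m → ℝ) ∈ A '' X := Iff.rfl
  simp only [hvalues, hfeasible]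
  have hcuts := zero_mem_iff_forall_sInf_dotProduct_image_nonpos (hne.image A)
    (hcpt.image A.continuous_of_finiteDimensional) (hconv.affine_image A)
  exact ⟨hcuts.mp, hcuts.mpr⟩
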